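/- Let k be a field, L ⊆ ℤ⁴ the subgroup generated by (1,1,0,−1) and (0,1,1,−1), and let I_irr ⊆ S = k[x₁,…,x₄,y₁,…,y₄] be the ideal ⟨x₁,x₃⟩ ∩ ⟨x₂,x₄⟩ ∩ ⟨y₁,y₃⟩ ∩ ⟨y₂,y₄⟩ (the irrelevant ideal of X_Σ × X_Σ for X_Σ = Bl_p ℙ² with nef-chamber fan). Then multiplication by the Laurent monomial x₂⁻¹y₂ maps I_irr into the lattice module: for every f ∈ I_irr, the element f · x₂⁻¹y₂ of the Laurent polynomial ring T lies in M_{Λ(L)}. In particular, the class of x₂⁻¹y₂ in T/M_{Λ(L)} is annihilated by I_irr (torsion exponent k = 1 suffices). -/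

import Mathlib

/-!
STATEMENT 8: for `L = ⟨(1,1,0,−1), (0,1,1,−1)⟩ ⊆ ℤ⁴` and the irrelevant ideal
`I_irr = ⟨x₁,x₃⟩ ∩ ⟨x₂,x₄⟩ ∩ ⟨y₁,y₃⟩ ∩ ⟨y₂,y₄⟩` of `Bl_p ℙ² × Bl_p ℙ²`,
multiplication by `x₂⁻¹y₂` maps `I_irr` into `M_{Λ(L)}`.
-/

noncomputable section

open MvPolynomial

/-- The Laurent polynomial ring `T = k[x₁^{±1},…,x₄^{±1},y₁^{±1},…,y₄^{±1}]`. -/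
abbrev LaurentT (k : Type*) [Field k] :=
  AddMonoidAlgebra k ((Fin 4 → ℤ) × (Fin 4 → ℤ))

/-- The polynomial ring `S = k[x₁,…,x₄,y₁,…,y₄]`; `Sum.inl i ↦ xᵢ₊₁`, `Sum.inr i ↦ yᵢ₊₁`. -/
abbrev PolyS (k : Type*) [Field k] := MvPolynomial (Fin 4 ⊕ Fin 4) k

/-- `xᵢ₊₁` (0-indexed). -/
def xv (k : Type*) [Field k] (i : Fin 4) : PolyS k := X (Sum.inl i)

/-- `yᵢ₊₁` (0-indexed). -/
def yv (k : Type*) [Field k] (i : Fin 4) : PolyS k := X (Sum.inr i)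

/-- The natural inclusion `S → T`. -/
def incl (k : Type*) [Field k] : PolyS k →+* LaurentT k :=
  MvPolynomial.eval₂Hom (algebraMap k (LaurentT k))
    (Sum.elim
      (fun i => AddMonoidAlgebra.single (Pi.single i 1, 0) (1 : k))
      (fun i => AddMonoidAlgebra.single (0, Pi.single i 1) (1 : k)))

/-- The lattice module `M_{Λ(L)} ⊆ T`: the `k`-span of monomials `x^a y^b` with
`(a,b) ∈ ℕ⁸ + Λ(L)`. -/
def latticeModule (k : Type*) [Field k] (L : AddSubgroup (Fin 4 → ℤ)) :
    Submodule k (LaurentT k) :=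
  Submodule.span k
    { t | ∃ (c d : Fin 4 → ℕ) (u : Fin 4 → ℤ), u ∈ L ∧
        t = AddMonoidAlgebra.single
          ((fun i => (c i : ℤ)) + u, (fun i => (d i : ℤ)) - u) (1 : k) }

/-- The irrelevant ideal `⟨x₁,x₃⟩ ∩ ⟨x₂,x₄⟩ ∩ ⟨y₁,y₃⟩ ∩ ⟨y₂,y₄⟩` of `X_Σ × X_Σ`. -/
def irrIdeal (k : Type*) [Field k] : Ideal (PolyS k) :=
  Ideal.span {xv k 0, xv k 2} ⊓ Ideal.span {xv k 1, xv k 3}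
    ⊓ Ideal.span {yv k 0, yv k 2} ⊓ Ideal.span {yv k 1, yv k 3}

theorem incl_monomial (k : Type*) [Field k] (m : Fin 4 ⊕ Fin 4 →₀ ℕ) (c : k) :
    incl k (monomial m c) =
      AddMonoidAlgebra.single
        ((fun i => (m (Sum.inl i) : ℤ)), fun i => (m (Sum.inr i) : ℤ)) c := by
  induction m using Finsupp.induction with
  | zero =>
    rw [monomial_zero']
    show (MvPolynomial.eval₂Hom _ _) (C c) = _
    rw [eval₂Hom_C, AddMonoidAlgebra.coe_algebraMap]
    rfl
  | single_add j n m hjm hn ih =>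
    rw [← one_mul c, ← monomial_mul, map_mul, ih, ← X_pow_eq_monomial, map_pow]
    have hX : incl k (X j) = Sum.elim
      (fun i => AddMonoidAlgebra.single ((Pi.single i 1 : Fin 4 → ℤ), (0 : Fin 4 → ℤ)) (1 : k))
      (fun i => AddMonoidAlgebra.single ((0 : Fin 4 → ℤ), Pi.single i 1) (1 : k)) j := by
      show (MvPolynomial.eval₂Hom _ _) (X j) = _
      rw [eval₂Hom_X']
    cases j with
    | inl i =>
      rw [hX]
      simp only [Sum.elim_inl, AddMonoidAlgebra.single_pow, one_pow,
        AddMonoidAlgebra.single_mul_single, one_mul]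
      congr 1
      ext i' <;> simp [Finsupp.single_apply, Pi.single_apply] <;> split <;> simp_all [eq_comm]
    | inr i =>
      rw [hX]
      simp only [Sum.elim_inr, AddMonoidAlgebra.single_pow, one_pow,
        AddMonoidAlgebra.single_mul_single, one_mul]
      congr 1
      ext i' <;> simp [Finsupp.single_apply, Pi.single_apply] <;> split <;> simp_all [eq_comm]

theorem single_mem_latticeModule (k : Type*) [Field k] (L : AddSubgroup (Fin 4 → ℤ))
    (v : (Fin 4 → ℤ) × (Fin 4 → ℤ)) (c0 : k)
    (h : ∃ (c d : Fin 4 → ℕ) (u : Fin 4 → ℤ), u ∈ L ∧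
        v = ((fun i => (c i : ℤ)) + u, (fun i => (d i : ℤ)) - u)) :
    AddMonoidAlgebra.single v c0 ∈ latticeModule k L := by
  obtain ⟨c, d, u, hu, hv⟩ := h
  have h1 : AddMonoidAlgebra.single v c0 = c0 • AddMonoidAlgebra.single v (1 : k) := by
    rw [AddMonoidAlgebra.smul_single', mul_one]
  rw [h1]
  exact Submodule.smul_mem _ _ (Submodule.subset_span ⟨c, d, u, hu, by rw [hv]⟩)

/-- For every `f ∈ I_irr`, `f · x₂⁻¹y₂ ∈ M_{Λ(L)}` (torsion exponent 1 suffices). -/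
theorem mul_extra_vertex_mem_latticeModule (k : Type*) [Field k] :
    ∀ f ∈ irrIdeal k,
      incl k f
          * AddMonoidAlgebra.single
              (-(Pi.single (1 : Fin 4) (1 : ℤ)), Pi.single (1 : Fin 4) (1 : ℤ)) (1 : k)
        ∈ latticeModule k (AddSubgroup.closure {![1, 1, 0, -1], ![0, 1, 1, -1]}) := by
  intro f hf
  have hB : f ∈ Ideal.span ((X : (Fin 4 ⊕ Fin 4) → PolyS k) '' {Sum.inl 1, Sum.inl 3}) := by
    rw [Set.image_pair]; exact hf.1.1.2
  have hC : f ∈ Ideal.span ((X : (Fin 4 ⊕ Fin 4) → PolyS k) '' {Sum.inr 0, Sum.inr 2}) := by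
    rw [Set.image_pair]; exact hf.1.2
  rw [mem_ideal_span_X_image] at hB hC
  have hsum : incl k f = ∑ m ∈ f.support, incl k (monomial m (coeff m f)) := by
    conv_lhs => rw [f.as_sum]
    rw [map_sum]
  rw [hsum, Finset.sum_mul]
  apply Submodule.sum_mem
  intro m hm
  rw [incl_monomial, AddMonoidAlgebra.single_mul_single, mul_one]
  obtain ⟨i, hi, hBm⟩ := hB m hm
  obtain ⟨j, hj, hCm⟩ := hC m hm
  simp only [Set.mem_insert_iff, Set.mem_singleton_iff] at hi hj
  apply single_mem_latticeModule
  set a : Fin 4 → ℤ := fun i => (m (Sum.inl i) : ℤ) with ha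
  set b : Fin 4 → ℤ := fun i => (m (Sum.inr i) : ℤ) with hb
  by_cases h2 : m (Sum.inl 1) ≠ 0
  · refine ⟨fun i => if i = 1 then m (Sum.inl i) - 1 else m (Sum.inl i),
      fun i => if i = 1 then m (Sum.inr i) + 1 else m (Sum.inr i), 0, AddSubgroup.zero_mem _, ?_⟩
    refine Prod.ext (funext fun i => ?_) (funext fun i => ?_) <;>
      simp only [Prod.fst_add, Prod.snd_add, Pi.add_apply, Pi.sub_apply,
        Pi.neg_apply, Pi.single_apply, ha, hb] <;>
      fin_cases i <;> simp <;> omega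
  · push_neg at h2
    have h4 : m (Sum.inl 3) ≠ 0 := by
      rcases hi with rfl | hi
      · exact absurd h2 hBm
      · subst hi; exact hBm
    rcases hj with rfl | hj
    · -- y₁ case: u = -(1,1,0,-1)
      refine ⟨![m (Sum.inl 0) + 1, 0, m (Sum.inl 2), m (Sum.inl 3) - 1],
        ![m (Sum.inr 0) - 1, m (Sum.inr 1), m (Sum.inr 2), m (Sum.inr 3) + 1],
        -![1, 1, 0, -1], neg_mem (AddSubgroup.subset_closure (by simp)), ?_⟩
      refine Prod.ext (funext fun i => ?_) (funext fun i => ?_) <;>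
        simp only [Prod.fst_add, Prod.snd_add, Pi.add_apply, Pi.sub_apply,
          Pi.neg_apply, Pi.single_apply, ha, hb] <;>
        fin_cases i <;> simp <;> omega
    · subst hj
      -- y₃ case: u = -(0,1,1,-1)
      refine ⟨![m (Sum.inl 0), 0, m (Sum.inl 2) + 1, m (Sum.inl 3) - 1],
        ![m (Sum.inr 0), m (Sum.inr 1), m (Sum.inr 2) - 1, m (Sum.inr 3) + 1],
        -![0, 1, 1, -1], neg_mem (AddSubgroup.subset_closure (by simp)), ?_⟩
      refine Prod.ext (funext fun i => ?_) (funext fun i => ?_) <;>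
        simp only [Prod.fst_add, Prod.snd_add, Pi.add_apply, Pi.sub_apply,
          Pi.neg_apply, Pi.single_apply, ha, hb] <;>
        fin_cases i <;> simp <;> omega

end
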